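/- Let A = √(8/3). Suppose ρ₁, u₁⁽¹⁾, θ₁, φ₁, ρ₂, u₁⁽²⁾, θ₂, φ₂, ρ₃, u₁⁽³⁾, θ₃, φ₃, h₁¹ are smooth real-valued functions of (t,x) ∈ ℝ×ℝ satisfying at every point: the first-order relations u₁⁽¹⁾ = Aρ₁, θ₁ = (2/3)ρ₁, φ₁ = ρ₁; the second-order relations u₁⁽²⁾ = Aρ₂ + h₁¹ with ∂ₓh₁¹ = −[∂ₜρ₁ + ∂ₓ(ρ₁u₁⁽¹⁾)], θ₂ = (2/3)ρ₂ − (1/9)ρ₁², φ₂ = ρ₂ + ∂ₓ²ρ₁ − (1/2)ρ₁²; the equation ∂ₜu₁⁽¹⁾ − A∂ₓu₁⁽²⁾ − Aρ₁∂ₓu₁⁽¹⁾ + u₁⁽¹⁾∂ₓu₁⁽¹⁾ + ∂ₓθ₂ + ∂ₓρ₂ + ∂ₓ(ρ₁θ₁) + ∂ₓφ₂ + ρ₁∂ₓφ₁ = 0; and the third-order system: (a) ∂ₜρ₂ − A∂ₓρ₃ + ∂ₓu₁⁽³⁾ + ∂ₓ(ρ₁u₁⁽²⁾) + ∂ₓ(ρ₂u₁⁽¹⁾)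 = 0; (b) ∂ₜu₁⁽²⁾ + ρ₁∂ₜu₁⁽¹⁾ − A∂ₓu₁⁽³⁾ − Aρ₁∂ₓu₁⁽²⁾ − Aρ₂∂ₓu₁⁽¹⁾ + ∂ₓ(u₁⁽¹⁾u₁⁽²⁾) + ρ₁u₁⁽¹⁾∂ₓu₁⁽¹⁾ + ∂ₓθ₃ + ∂ₓρ₃ + ∂ₓ(ρ₁θ₂) + ∂ₓ(ρ₂θ₁) + ∂ₓφ₃ + ρ₂∂ₓφ₁ + ρ₁∂ₓφ₂ = 0; (c) ∂ₜθ₂ − A∂ₓθ₃ + (2/3)∂ₓu₁⁽³⁾ + (2/3)θ₁∂ₓu₁⁽²⁾ + (2/3)θ₂∂ₓu₁⁽¹⁾ + u₁⁽¹⁾∂ₓθ₂ + u₁⁽²⁾∂ₓθ₁ = 0; (d) ∂ₓ²φ₂ − φ₃ − φ₁φ₂ − (1/6)φ₁³ + ρ₃ = 0. Then ρ₂ satisfies the linearized inhomogeneous KdV equation 2√(8/3)·∂ₜρ₂ + (58/9)·∂ₓ(ρ₁ρ₂) + ∂ₓ³ρ₂ = h₂¹ − (1/A)h₃¹, where h₂¹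 := −Aρ₁²∂ₓu₁⁽¹⁾ + ρ₁∂ₓ(ρ₁θ₁) + ρ₁²∂ₓφ₁ + ∂ₓ((1/6)φ₁³) − ∂ₜh₁¹ − 2A∂ₓ(ρ₁h₁¹) + (1/9)ρ₁²∂ₓρ₁ − ∂ₓ³(∂ₓ²ρ₁ − (1/2)ρ₁²) + ∂ₓ(ρ₁∂ₓ²ρ₁) − ∂ₓ((1/2)ρ₁³) and h₃¹ := −(2/3)∂ₓ(ρ₁h₁¹) − (1/9)∂ₜ(ρ₁²) + (4/9)ρ₁∂ₓh₁¹ − (2/27)Aρ₁²∂ₓρ₁ − (1/9)Aρ₁∂ₓ(ρ₁²) + (2/3)h₁¹∂ₓρ₁. -/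

import Mathlib

/-- Partial derivative in `t` of a function of `(t, x) : ℝ × ℝ`. -/
noncomputable def pdt (f : ℝ × ℝ → ℝ) (p : ℝ × ℝ) : ℝ :=
  deriv (fun s => f (s, p.2)) p.1

/-- Partial derivative in `x` of a function of `(t, x) : ℝ × ℝ`. -/
noncomputable def pdx (f : ℝ × ℝ → ℝ) (p : ℝ × ℝ) : ℝ :=
  deriv (fun y => f (p.1, y)) p.2

/-!
After substituting the first- and second-order relations (and φ₃ from the Poisson equation (d)),
every hypothesis becomes an identity between partial derivatives of ρ₁, ρ₂, ρ₃, h₁, u₃, θ₃.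
Since A² = 8/3, the combination 2·(a) + A·(b) + (c) cancels ∂ₓρ₃, ∂ₓu₃ and ∂ₓθ₃; subtracting
Aρ₁ times the second-order momentum equation removes the ∂ₜu₁ term of (b), and what is left is
A times the claimed equation.
-/

open scoped ContDiff

section PartialDerivatives

variable {f g : ℝ × ℝ → ℝ}

theorem pdt_add (hf : Differentiable ℝ f) (hg : Differentiable ℝ g) :
    pdt (fun q => f q + g q) = fun q => pdt f q + pdt g q :=
  funext fun _ => deriv_fun_add (by fun_prop) (by fun_prop)

theorem pdt_sub (hf : Differentiable ℝ f) (hg : Differentiable ℝ g) :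
    pdt (fun q => f q - g q) = fun q => pdt f q - pdt g q :=
  funext fun _ => deriv_fun_sub (by fun_prop) (by fun_prop)

theorem pdt_const_mul (c : ℝ) : pdt (fun q => c * f q) = fun q => c * pdt f q :=
  funext fun _ => deriv_const_mul_field c

theorem pdt_pow (hf : Differentiable ℝ f) (n : ℕ) :
    pdt (fun q => f q ^ (n + 1)) = fun q => (n + 1) * f q ^ n * pdt f q :=
  funext fun p => by
    have hslice : DifferentiableAt ℝ (fun s => f (s, p.2)) p.1 := by fun_prop
    simpa [pdt] using (hslice.hasDerivAt.fun_pow (n + 1)).deriv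

theorem pdx_add (hf : Differentiable ℝ f) (hg : Differentiable ℝ g) :
    pdx (fun q => f q + g q) = fun q => pdx f q + pdx g q :=
  funext fun _ => deriv_fun_add (by fun_prop) (by fun_prop)

theorem pdx_sub (hf : Differentiable ℝ f) (hg : Differentiable ℝ g) :
    pdx (fun q => f q - g q) = fun q => pdx f q - pdx g q :=
  funext fun _ => deriv_fun_sub (by fun_prop) (by fun_prop)

theorem pdx_mul (hf : Differentiable ℝ f) (hg : Differentiable ℝ g) :
    pdx (fun q => f q * g q) = fun q => pdx f q * g q + f q * pdx g q :=
  funext fun _ => deriv_fun_mul (by fun_prop) (by fun_prop)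

theorem pdx_const (c : ℝ) : pdx (fun _ => c) = fun _ => 0 :=
  funext fun _ => deriv_const _ c

theorem pdx_pow (hf : Differentiable ℝ f) (n : ℕ) :
    pdx (fun q => f q ^ (n + 1)) = fun q => (n + 1) * f q ^ n * pdx f q :=
  funext fun p => by
    have hslice : DifferentiableAt ℝ (fun y => f (p.1, y)) p.2 := by fun_prop
    simpa [pdx] using (hslice.hasDerivAt.fun_pow (n + 1)).deriv

theorem pdx_eq_fderiv (hf : Differentiable ℝ f) : pdx f = fun p => fderiv ℝ f p (0, 1) :=
  funext fun p => ((hf p).hasFDerivAt.comp_hasDerivAt p.2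
    ((hasDerivAt_const p.2 p.1).prodMk (hasDerivAt_id p.2))).deriv

@[fun_prop]
theorem ContDiff.pdx (hf : ContDiff ℝ ∞ f) : ContDiff ℝ ∞ (pdx f) := by
  rw [pdx_eq_fderiv (hf.differentiable (by simp))]
  fun_prop

end PartialDerivatives

theorem linearized_kdv_for_second_order_profile_general
    (A : ℝ) (hA : A = Real.sqrt (8 / 3))
    (ρ₁ u₁ θ₁ φ₁ ρ₂ u₂ θ₂ φ₂ ρ₃ u₃ θ₃ φ₃ h₁ : ℝ × ℝ → ℝ)
    (hρ₁ : ContDiff ℝ (⊤ : ℕ∞) ρ₁) (hρ₂ : ContDiff ℝ (⊤ : ℕ∞) ρ₂)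
    (hρ₃ : ContDiff ℝ (⊤ : ℕ∞) ρ₃) (hh₁ : ContDiff ℝ (⊤ : ℕ∞) h₁)
    (rel_u₁ : ∀ p, u₁ p = A * ρ₁ p)
    (rel_θ₁ : ∀ p, θ₁ p = (2 / 3) * ρ₁ p)
    (rel_φ₁ : ∀ p, φ₁ p = ρ₁ p)
    (rel_u₂ : ∀ p, u₂ p = A * ρ₂ p + h₁ p)
    (rel_θ₂ : ∀ p, θ₂ p = (2 / 3) * ρ₂ p - (1 / 9) * (ρ₁ p) ^ 2)
    (rel_φ₂ : ∀ p, φ₂ p = ρ₂ p + pdx (pdx ρ₁) p - (1 / 2) * (ρ₁ p) ^ 2)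
    (eq2 : ∀ p, pdt u₁ p - A * pdx u₂ p - A * ρ₁ p * pdx u₁ p + u₁ p * pdx u₁ p
      + pdx θ₂ p + pdx ρ₂ p + pdx (fun q => ρ₁ q * θ₁ q) p + pdx φ₂ p
      + ρ₁ p * pdx φ₁ p = 0)
    (eqa : ∀ p, pdt ρ₂ p - A * pdx ρ₃ p + pdx u₃ p
      + pdx (fun q => ρ₁ q * u₂ q) p + pdx (fun q => ρ₂ q * u₁ q) p = 0)
    (eqb : ∀ p, pdt u₂ p + ρ₁ p * pdt u₁ p - A * pdx u₃ p - A * ρ₁ p * pdx u₂ p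
      - A * ρ₂ p * pdx u₁ p + pdx (fun q => u₁ q * u₂ q) p
      + ρ₁ p * u₁ p * pdx u₁ p + pdx θ₃ p + pdx ρ₃ p
      + pdx (fun q => ρ₁ q * θ₂ q) p + pdx (fun q => ρ₂ q * θ₁ q) p
      + pdx φ₃ p + ρ₂ p * pdx φ₁ p + ρ₁ p * pdx φ₂ p = 0)
    (eqc : ∀ p, pdt θ₂ p - A * pdx θ₃ p + (2 / 3) * pdx u₃ p
      + (2 / 3) * θ₁ p * pdx u₂ p + (2 / 3) * θ₂ p * pdx u₁ p
      + u₁ p * pdx θ₂ p + u₂ p * pdx θ₁ p = 0)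
    (eqd : ∀ p, pdx (pdx φ₂) p - φ₃ p - φ₁ p * φ₂ p - (1 / 6) * (φ₁ p) ^ 3
      + ρ₃ p = 0) :
    ∀ p, 2 * Real.sqrt (8 / 3) * pdt ρ₂ p
        + (58 / 9) * pdx (fun q => ρ₁ q * ρ₂ q) p + pdx (pdx (pdx ρ₂)) p
      = (-(A * (ρ₁ p) ^ 2 * pdx u₁ p) + ρ₁ p * pdx (fun q => ρ₁ q * θ₁ q) p
          + (ρ₁ p) ^ 2 * pdx φ₁ p + pdx (fun q => (1 / 6) * (φ₁ q) ^ 3) p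
          - pdt h₁ p - 2 * A * pdx (fun q => ρ₁ q * h₁ q) p
          + (1 / 9) * (ρ₁ p) ^ 2 * pdx ρ₁ p
          - pdx (pdx (pdx (fun q => pdx (pdx ρ₁) q - (1 / 2) * (ρ₁ q) ^ 2))) p
          + pdx (fun q => ρ₁ q * pdx (pdx ρ₁) q) p
          - pdx (fun q => (1 / 2) * (ρ₁ q) ^ 3) p)
        - (1 / A) * (-((2 / 3) * pdx (fun q => ρ₁ q * h₁ q) p)
          - (1 / 9) * pdt (fun q => (ρ₁ q) ^ 2) p + (4 / 9) * ρ₁ p * pdx h₁ p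
          - (2 / 27) * A * (ρ₁ p) ^ 2 * pdx ρ₁ p
          - (1 / 9) * A * ρ₁ p * pdx (fun q => (ρ₁ q) ^ 2) p
          + (2 / 3) * h₁ p * pdx ρ₁ p) := by
  obtain rfl : φ₃ = fun q => pdx (pdx φ₂) q - φ₁ q * φ₂ q - 1 / 6 * φ₁ q ^ 3 + ρ₃ q :=
    funext fun q => by linarith [eqd q]
  obtain rfl : u₁ = fun q => A * ρ₁ q := funext rel_u₁
  obtain rfl : θ₁ = fun q => 2 / 3 * ρ₁ q := funext rel_θ₁
  obtain rfl : ρ₁ = φ₁ := (funext rel_φ₁).symm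
  obtain rfl : u₂ = fun q => A * ρ₂ q + h₁ q := funext rel_u₂
  obtain rfl : θ₂ = fun q => 2 / 3 * ρ₂ q - 1 / 9 * ρ₁ q ^ 2 := funext rel_θ₂
  obtain rfl : φ₂ = fun q => ρ₂ q + pdx (pdx ρ₁) q - 1 / 2 * ρ₁ q ^ 2 := funext rel_φ₂
  have hA0 : A ≠ 0 := by rw [hA]; positivity
  have hA2 : A ^ 2 = 8 / 3 := by rw [hA]; exact Real.sq_sqrt (by norm_num)
  have hA_inv : 1 / A = 3 * A / 8 := by field_simp; linear_combination -3 * hA2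
  intro p
  have Ea := eqa p
  have Eb := eqb p
  have Ec := eqc p
  have E2 := eq2 p
  simp (disch := fun_prop (disch := simp)) only [pdt_add, pdt_sub, pdt_const_mul, pdt_pow,
    pdx_add, pdx_sub, pdx_mul, pdx_const, pdx_pow, pow_one] at Ea Eb Ec E2 ⊢
  rw [← hA, hA_inv]
  refine mul_left_cancel₀ hA0 ?_
  linear_combination 2 * Ea + A * Eb + Ec - (A * ρ₁ p) * E2 +
    (-(1 / 9 * A * ρ₁ p ^ 2 * pdx ρ₁ p) - A * ρ₁ p * pdx ρ₂ p + pdt ρ₂ p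
      - 1 / 12 * ρ₁ p * pdt ρ₁ p + pdx u₃ p + h₁ p * pdx ρ₁ p
      + 11 / 12 * ρ₁ p * pdx h₁ p) * hA2

/-- the second KdV profile `ρ₂` satisfies the linearized
inhomogeneous KdV equation
`2√(8/3)·∂ₜρ₂ + (58/9)·∂ₓ(ρ₁ρ₂) + ∂ₓ³ρ₂ = h₂¹ − (1/A)h₃¹`. -/
theorem linearized_kdv_for_second_order_profile
    (A : ℝ) (hA : A = Real.sqrt (8 / 3))
    (ρ₁ u₁ θ₁ φ₁ ρ₂ u₂ θ₂ φ₂ ρ₃ u₃ θ₃ φ₃ h₁ : ℝ × ℝ → ℝ)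
    (hρ₁ : ContDiff ℝ (⊤ : ℕ∞) ρ₁) (hu₁ : ContDiff ℝ (⊤ : ℕ∞) u₁)
    (hθ₁ : ContDiff ℝ (⊤ : ℕ∞) θ₁) (hφ₁ : ContDiff ℝ (⊤ : ℕ∞) φ₁)
    (hρ₂ : ContDiff ℝ (⊤ : ℕ∞) ρ₂) (hu₂ : ContDiff ℝ (⊤ : ℕ∞) u₂)
    (hθ₂ : ContDiff ℝ (⊤ : ℕ∞) θ₂) (hφ₂ : ContDiff ℝ (⊤ : ℕ∞) φ₂)
    (hρ₃ : ContDiff ℝ (⊤ : ℕ∞) ρ₃) (hu₃ : ContDiff ℝ (⊤ : ℕ∞) u₃)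
    (hθ₃ : ContDiff ℝ (⊤ : ℕ∞) θ₃) (hφ₃ : ContDiff ℝ (⊤ : ℕ∞) φ₃)
    (hh₁ : ContDiff ℝ (⊤ : ℕ∞) h₁)
    (rel_u₁ : ∀ p, u₁ p = A * ρ₁ p)
    (rel_θ₁ : ∀ p, θ₁ p = (2 / 3) * ρ₁ p)
    (rel_φ₁ : ∀ p, φ₁ p = ρ₁ p)
    (rel_u₂ : ∀ p, u₂ p = A * ρ₂ p + h₁ p)
    (rel_h₁ : ∀ p, pdx h₁ p = -(pdt ρ₁ p + pdx (fun q => ρ₁ q * u₁ q) p))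
    (rel_θ₂ : ∀ p, θ₂ p = (2 / 3) * ρ₂ p - (1 / 9) * (ρ₁ p) ^ 2)
    (rel_φ₂ : ∀ p, φ₂ p = ρ₂ p + pdx (pdx ρ₁) p - (1 / 2) * (ρ₁ p) ^ 2)
    (eq2 : ∀ p, pdt u₁ p - A * pdx u₂ p - A * ρ₁ p * pdx u₁ p + u₁ p * pdx u₁ p
      + pdx θ₂ p + pdx ρ₂ p + pdx (fun q => ρ₁ q * θ₁ q) p + pdx φ₂ p
      + ρ₁ p * pdx φ₁ p = 0)
    (eqa : ∀ p, pdt ρ₂ p - A * pdx ρ₃ p + pdx u₃ p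
      + pdx (fun q => ρ₁ q * u₂ q) p + pdx (fun q => ρ₂ q * u₁ q) p = 0)
    (eqb : ∀ p, pdt u₂ p + ρ₁ p * pdt u₁ p - A * pdx u₃ p - A * ρ₁ p * pdx u₂ p
      - A * ρ₂ p * pdx u₁ p + pdx (fun q => u₁ q * u₂ q) p
      + ρ₁ p * u₁ p * pdx u₁ p + pdx θ₃ p + pdx ρ₃ p
      + pdx (fun q => ρ₁ q * θ₂ q) p + pdx (fun q => ρ₂ q * θ₁ q) p
      + pdx φ₃ p + ρ₂ p * pdx φ₁ p + ρ₁ p * pdx φ₂ p = 0)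
    (eqc : ∀ p, pdt θ₂ p - A * pdx θ₃ p + (2 / 3) * pdx u₃ p
      + (2 / 3) * θ₁ p * pdx u₂ p + (2 / 3) * θ₂ p * pdx u₁ p
      + u₁ p * pdx θ₂ p + u₂ p * pdx θ₁ p = 0)
    (eqd : ∀ p, pdx (pdx φ₂) p - φ₃ p - φ₁ p * φ₂ p - (1 / 6) * (φ₁ p) ^ 3
      + ρ₃ p = 0) :
    ∀ p, 2 * Real.sqrt (8 / 3) * pdt ρ₂ p
        + (58 / 9) * pdx (fun q => ρ₁ q * ρ₂ q) p + pdx (pdx (pdx ρ₂)) p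
      = (-(A * (ρ₁ p) ^ 2 * pdx u₁ p) + ρ₁ p * pdx (fun q => ρ₁ q * θ₁ q) p
          + (ρ₁ p) ^ 2 * pdx φ₁ p + pdx (fun q => (1 / 6) * (φ₁ q) ^ 3) p
          - pdt h₁ p - 2 * A * pdx (fun q => ρ₁ q * h₁ q) p
          + (1 / 9) * (ρ₁ p) ^ 2 * pdx ρ₁ p
          - pdx (pdx (pdx (fun q => pdx (pdx ρ₁) q - (1 / 2) * (ρ₁ q) ^ 2))) p
          + pdx (fun q => ρ₁ q * pdx (pdx ρ₁) q) p
          - pdx (fun q => (1 / 2) * (ρ₁ q) ^ 3) p)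
        - (1 / A) * (-((2 / 3) * pdx (fun q => ρ₁ q * h₁ q) p)
          - (1 / 9) * pdt (fun q => (ρ₁ q) ^ 2) p + (4 / 9) * ρ₁ p * pdx h₁ p
          - (2 / 27) * A * (ρ₁ p) ^ 2 * pdx ρ₁ p
          - (1 / 9) * A * ρ₁ p * pdx (fun q => (ρ₁ q) ^ 2) p
          + (2 / 3) * h₁ p * pdx ρ₁ p) :=
  linearized_kdv_for_second_order_profile_general A hA ρ₁ u₁ θ₁ φ₁ ρ₂ u₂ θ₂ φ₂ ρ₃ u₃ θ₃ φ₃ h₁ hρ₁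
    hρ₂ hρ₃ hh₁ rel_u₁ rel_θ₁ rel_φ₁ rel_u₂ rel_θ₂ rel_φ₂ eq2 eqa eqb eqc eqd
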